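/- arXiv:2011.10376 — 4 statements merged into one kernel-verified Lean document; each statement's English description precedes it below -/
import Mathlib

section
/- The Polish group ∏_{n∈ℕ} ℤ (countable product of copies of ℤ with the product topology) cannot be covered by countably many coarsely bounded subsets. -/
/-- A subset `B` of a topological additive group is coarsely bounded if it has finite
diameter with respect to every continuous left-invariant pseudometric. -/
def AddCoarselyBounded {G : Type*} [AddGroup G] [TopologicalSpace G] (B : Set G) : Prop :=
  ∀ d : G → G → ℝ,
    Continuous (fun p : G × G => d p.1 p.2) →
    (∀ k g h : G, d (k + g) (k + h) = d g h) →
    (∀ g : G, d g g = 0) →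
    (∀ g h : G, d g h = d h g) →
    (∀ g h k : G, d g k ≤ d g h + d h k) →
    ∃ C : ℝ, ∀ g ∈ B, ∀ h ∈ B, d g h ≤ C

/-! Every coordinate projection `∏ ℤ → ℤ` is a continuous homomorphism into a normed group, so
it pulls back the metric of `ℤ` to a continuous left-invariant pseudometric; hence a coarsely
bounded set has bounded projections. Given countably many such sets `Bₙ`, choose the `n`-th
coordinate of `f` outside the bounded projection of `Bₙ` to the `n`-th coordinate: then `f`
lies in no `Bₙ`. -/

open Bornology Set

theorem AddCoarselyBounded.isBounded_image {G H : Type*} [AddGroup G] [TopologicalSpace G]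
    [SeminormedAddCommGroup H] {B : Set G} (hB : AddCoarselyBounded B) (φ : G →+ H)
    (hφ : Continuous φ) : IsBounded (φ '' B) := by
  obtain ⟨C, hC⟩ := hB (fun g h => dist (φ g) (φ h))
    (by fun_prop)
    (fun k g h => by simp only [map_add, dist_add_left])
    (fun g => dist_self _)
    (fun g h => dist_comm _ _)
    (fun g h k => dist_triangle _ _ _)
  rw [Metric.isBounded_iff]
  exact ⟨C, forall_mem_image.2 fun g hg => forall_mem_image.2 fun h hh => hC g hg h hh⟩

theorem exists_forall_notMem_of_eval_image_ne_univ {ι α : Type*} {B : ι → Set (ι → α)}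
    (hB : ∀ i, Function.eval i '' B i ≠ univ) : ∃ f : ι → α, ∀ i, f ∉ B i := by
  choose f hf using fun i => (ne_univ_iff_exists_notMem _).1 (hB i)
  exact ⟨f, fun i hi => hf i (mem_image_of_mem _ hi)⟩

theorem prodZ_not_sigma_bounded :
    ¬ ∃ B : ℕ → Set (ℕ → ℤ),
      (∀ n, AddCoarselyBounded (B n)) ∧ (⋃ n, B n) = Set.univ := by
  rintro ⟨B, hB, hU⟩
  have hproj : ∀ n, Function.eval n '' B n ≠ univ := fun n hn => by
    have hbdd := ((hB n).isBounded_image (Pi.evalAddMonoidHom _ n) (continuous_apply n)).bddAbove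
    exact not_bddAbove_univ (hn ▸ hbdd)
  obtain ⟨f, hf⟩ := exists_forall_notMem_of_eval_image_ne_univ hproj
  obtain ⟨n, hn⟩ := mem_iUnion.1 (hU ▸ mem_univ f : f ∈ ⋃ n, B n)
  exact hf n hn
end

section
/- Let G be an abelian topological group and let G₀ ≤ G be an open subgroup that is divisible as an abstract abelian group. Then the short exact sequence 0 → G₀ → G → G/G₀ → 0 splits topologically: G is topologically isomorphic to G₀ ⊕ G/G₀, where G/G₀ carries the discrete topology. -/
/-!
A divisible abelian group is an injective `ℤ`-module, so the identity of `H` extends to a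
retraction `r : G →* H`, and `g ↦ (r g, g H)` is an isomorphism `G ≃* H × G ⧸ H`. Since `r` is
the identity on the open neighbourhood `H` of `1`, it is continuous, and since `G ⧸ H` is
discrete, so is the inverse map.
-/

open Function Topology

instance Additive.divisibleByNat {A : Type*} [Monoid A] [RootableBy A ℕ] :
    DivisibleBy (Additive A) ℕ where
  div a n := .ofMul (RootableBy.root a.toMul n)
  div_zero a := congrArg Additive.ofMul (RootableBy.root_zero a.toMul)
  div_cancel a hn := congrArg Additive.ofMul (RootableBy.root_cancel a.toMul hn)

theorem MonoidHom.exists_comp_eq_id_of_rootableBy {A B : Type*} [CommGroup A] [CommGroup B]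
    [RootableBy A ℕ] (f : A →* B) (hf : Injective f) : ∃ r : B →* A, r.comp f = .id A := by
  let := AddGroup.divisibleByIntOfDivisibleByNat (Additive A)
  obtain ⟨r, hr⟩ := (Module.Baer.of_divisible (Additive A)).extension_property_addMonoidHom
    (toAdditive f) hf (.id _)
  exact ⟨toAdditive.symm r, toAdditive.injective hr⟩

namespace Subgroup

variable {G : Type*} [Group G] {H : Subgroup G} {r : G →* H}

theorem continuous_retraction_of_isOpen [TopologicalSpace G] [IsTopologicalGroup G]
    (hH : IsOpen (H : Set G)) (hr : ∀ h : H, r h = h) : Continuous r := by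
  have hval : ((↑) ∘ r : G → G) =ᶠ[𝓝 1] id := by
    filter_upwards [hH.mem_nhds H.one_mem] with g hg using congrArg Subtype.val (hr ⟨g, hg⟩)
  exact continuous_of_continuousAt_one r
    (IsInducing.subtypeVal.continuousAt_iff.mpr (continuousAt_id.congr hval.symm))

variable [H.Normal]

theorem injective_prod_mk'_of_retraction (hr : ∀ h : H, r h = h) :
    Injective (r.prod (QuotientGroup.mk' H)) := by
  refine (injective_iff_map_eq_one _).mpr fun g hg => ?_
  have hgH : g ∈ H := (QuotientGroup.eq_one_iff g).mp (congrArg Prod.snd hg)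
  have hrg : r g = 1 := congrArg Prod.fst hg
  simpa [hrg] using (congrArg Subtype.val (hr ⟨g, hgH⟩)).symm

/-- `q.out * (r q.out)⁻¹` is the lift of `q ∈ G ⧸ H` lying in `ker r`. -/
theorem leftInverse_prod_mk'_of_retraction (hr : ∀ h : H, r h = h) :
    LeftInverse (r.prod (QuotientGroup.mk' H)) fun p => p.1 * (p.2.out * (r p.2.out : G)⁻¹) := by
  rintro ⟨h, q⟩
  ext
  · simp [hr]
  · simp [QuotientGroup.eq_one_iff]

variable (r) in
noncomputable def mulEquivProdQuotientOfRetraction (hr : ∀ h : H, r h = h) : G ≃* H × G ⧸ H where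
  toFun := r.prod (QuotientGroup.mk' H)
  invFun p := p.1 * (p.2.out * (r p.2.out : G)⁻¹)
  left_inv _ := injective_prod_mk'_of_retraction hr (leftInverse_prod_mk'_of_retraction hr _)
  right_inv := leftInverse_prod_mk'_of_retraction hr
  map_mul' := map_mul _

variable (r) in
noncomputable def continuousMulEquivProdQuotientOfRetraction [TopologicalSpace G]
    [IsTopologicalGroup G] (hH : IsOpen (H : Set G)) (hr : ∀ h : H, r h = h) :
    G ≃ₜ* H × G ⧸ H :=
  have : DiscreteTopology (G ⧸ H) := QuotientGroup.discreteTopology hH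
  { mulEquivProdQuotientOfRetraction r hr with
    continuous_toFun := (continuous_retraction_of_isOpen hH hr).prodMk continuous_quotient_mk'
    continuous_invFun := continuous_fst.subtype_val.mul <|
      (continuous_of_discreteTopology (f := fun q : G ⧸ H => q.out * (r q.out : G)⁻¹)).comp
        continuous_snd }

end Subgroup

theorem open_divisible_subgroup_splits {G : Type*} [CommGroup G] [TopologicalSpace G]
    [IsTopologicalGroup G] (H : Subgroup G) (hopen : IsOpen (H : Set G))
    (hdiv : ∀ (x : H) (n : ℕ), n ≠ 0 → ∃ y : H, y ^ n = x) :
    ∃ e : G ≃ₜ (H × (G ⧸ H)), ∀ x y : G, e (x * y) = e x * e y := by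
  let : RootableBy H ℕ := rootableByOfPowLeftSurj H ℕ fun hn x => hdiv x _ hn
  obtain ⟨r, hr⟩ := H.subtype.exists_comp_eq_id_of_rootableBy H.subtype_injective
  let e := H.continuousMulEquivProdQuotientOfRetraction r hopen (DFunLike.congr_fun hr)
  exact ⟨e.toHomeomorph, map_mul e⟩
end

section
/- Let M be a semifinite von Neumann algebra with normal faithful semifinite trace τ, let 1 ≤ p < ∞, and let a be a self-adjoint element of M ∩ L^p(M,τ) with ‖a‖_∞ ≤ π. Then (1/2)‖a‖_p ≤ ‖e^{ia} − 1‖_p ≤ ‖a‖_p. -/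
/-!
For self-adjoint `a` both operators are functions of `a`: `|a|² = a²` and
`|e^{ia} - 1|² = 2(1 - cos a)`, so each `L^p`-norm is `τ(h(a))^{1/p}` for a continuous `h`.
Since `‖a‖ ≤ π`, the spectrum of `a` lies in `[-π, π]`, where `λ²/4 ≤ 2(1 - cos λ) ≤ λ²`;
the functional calculus preserves these pointwise inequalities and the trace is monotone and
positively homogeneous on positive operators.
-/

open scoped ENNReal NNReal
open ContinuousLinearMap Filter

variable {H : Type*} [NormedAddCommGroup H] [InnerProductSpace ℂ H] [CompleteSpace H]

/-- A normal faithful semifinite trace on a von Neumann algebra `M ⊆ B(H)`,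
with values in `[0, ∞]`. -/
structure IsNormalFaithfulSemifiniteTrace (M : VonNeumannAlgebra H)
    (τ : (H →L[ℂ] H) → ℝ≥0∞) : Prop where
  map_zero : τ 0 = 0
  map_add : ∀ x y : H →L[ℂ] H, x.IsPositive → y.IsPositive → τ (x + y) = τ x + τ y
  map_smul : ∀ (c : ℝ≥0) (x : H →L[ℂ] H), x.IsPositive → τ ((c : ℂ) • x) = c * τ x
  tracial : ∀ x : H →L[ℂ] H, τ (star x * x) = τ (x * star x)
  faithful : ∀ x : H →L[ℂ] H, x ∈ M → x.IsPositive → τ x = 0 → x = 0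
  semifinite : ∀ x : H →L[ℂ] H, x ∈ M → x.IsPositive → τ x ≠ 0 →
      ∃ y : H →L[ℂ] H, y ∈ M ∧ y.IsPositive ∧ (x - y).IsPositive ∧ τ y ≠ 0 ∧ τ y ≠ ⊤
  normal : ∀ (u : ℕ → (H →L[ℂ] H)) (x : H →L[ℂ] H),
      (∀ n, (u n).IsPositive) → (∀ n, (u (n + 1) - u n).IsPositive) →
      (∀ v : H, Tendsto (fun n => u n v) atTop (nhds (x v))) →
      Tendsto (fun n => τ (u n)) atTop (nhds (τ x))

/-- The absolute value `|x| = (x* x)^{1/2}` of an operator, via continuous functional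
calculus. -/
noncomputable def ncAbs (x : H →L[ℂ] H) : H →L[ℂ] H :=
  cfc (fun t : ℝ => Real.sqrt t) (star x * x)

/-- The noncommutative `L^p`-norm `‖x‖_p = τ(|x|^p)^{1/p}` associated to a trace `τ`. -/
noncomputable def ncLpNorm (τ : (H →L[ℂ] H) → ℝ≥0∞) (p : ℝ) (x : H →L[ℂ] H) : ℝ≥0∞ :=
  (τ (cfc (fun t : ℝ => |t| ^ p) (ncAbs x))) ^ (1 / p)

section CStarAlgebra

variable {A : Type*} [CStarAlgebra A]

lemma IsSelfAdjoint.exp_I_smul_sub_one {a : A} (ha : IsSelfAdjoint a) :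
    NormedSpace.exp (Complex.I • a) - 1 =
      cfc (fun z : ℂ => Complex.exp (Complex.I * z) - 1) a := by
  have := ha.isStarNormal
  rw [cfc_sub .., cfc_const_one ℂ a, ← CFC.complex_exp_eq_normedSpace_exp,
    ← cfc_comp_smul Complex.I Complex.exp a]
  rfl

lemma star_cfc_mul_cfc (g : ℂ → ℂ) (a : A) (hg : ContinuousOn g (spectrum ℂ a)) :
    star (cfc g a) * cfc g a = cfc (fun z => ((‖g z‖ ^ 2 : ℝ) : ℂ)) a := by
  rw [← cfc_star, ← cfc_mul _ _ a hg.star hg]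
  exact cfc_congr fun z _ => by simp [Complex.conj_mul']

lemma IsSelfAdjoint.star_exp_I_smul_sub_one_mul {a : A} (ha : IsSelfAdjoint a) :
    star (NormedSpace.exp (Complex.I • a) - 1) * (NormedSpace.exp (Complex.I • a) - 1) =
      cfc (fun t : ℝ => ‖Complex.exp (Complex.I * t) - 1‖ ^ 2) a := by
  rw [ha.exp_I_smul_sub_one, star_cfc_mul_cfc _ a (by fun_prop), cfc_real_eq_complex _ ha]
  refine cfc_congr fun z hz => ?_
  rw [← ha.mem_spectrum_eq_re hz]

end CStarAlgebra

namespace IsNormalFaithfulSemifiniteTrace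

variable {M : VonNeumannAlgebra H} {τ : (H →L[ℂ] H) → ℝ≥0∞}

lemma mono (hτ : IsNormalFaithfulSemifiniteTrace M τ) {u v : H →L[ℂ] H} (hu : 0 ≤ u)
    (huv : u ≤ v) : τ u ≤ τ v := by
  rw [← add_sub_cancel u v, hτ.map_add u (v - u) ((nonneg_iff_isPositive u).mp hu)
    ((le_def u v).mp huv)]
  exact le_self_add

lemma mul_cfc_le_cfc (hτ : IsNormalFaithfulSemifiniteTrace M τ) {a : H →L[ℂ] H} (c : ℝ≥0)
    {F G : ℝ → ℝ} (hF : ContinuousOn F (spectrum ℝ a)) (hG : ContinuousOn G (spectrum ℝ a))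
    (hF₀ : ∀ t ∈ spectrum ℝ a, 0 ≤ F t) (hFG : ∀ t ∈ spectrum ℝ a, c * F t ≤ G t) :
    c * τ (cfc F a) ≤ τ (cfc G a) := by
  have hcF : (c : ℂ) • cfc F a = cfc (fun t => c * F t) a := by
    rw [cfc_const_mul _ _ a hF]
    rfl
  rw [← hτ.map_smul c _ ((nonneg_iff_isPositive _).mp (cfc_nonneg hF₀)), hcF]
  exact hτ.mono (cfc_nonneg fun t ht => mul_nonneg c.coe_nonneg (hF₀ t ht)) (cfc_mono hFG)

end IsNormalFaithfulSemifiniteTrace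

section ncLpNorm

variable {x a : H →L[ℂ] H} {f : ℝ → ℝ}

lemma ncAbs_eq_cfc_abs (ha : IsSelfAdjoint a) (hf : ContinuousOn f (spectrum ℝ a))
    (hx : star x * x = cfc (fun t => f t ^ 2) a) : ncAbs x = cfc (fun t => |f t|) a := by
  rw [ncAbs, hx, ← cfc_comp' Real.sqrt (fun t => f t ^ 2) a]
  exact cfc_congr fun t _ => Real.sqrt_sq_eq_abs (f t)

lemma ncLpNorm_eq_of_star_mul_self_eq_cfc {τ : (H →L[ℂ] H) → ℝ≥0∞} {p : ℝ} (hp : 0 ≤ p)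
    (ha : IsSelfAdjoint a) (hf : ContinuousOn f (spectrum ℝ a))
    (hx : star x * x = cfc (fun t => f t ^ 2) a) :
    ncLpNorm τ p x = τ (cfc (fun t => |f t| ^ p) a) ^ (1 / p) := by
  rw [ncLpNorm, ncAbs_eq_cfc_abs ha hf hx, ← cfc_comp' (fun t : ℝ => |t| ^ p) (fun t => |f t|) a]
  simp only [abs_abs]

lemma IsNormalFaithfulSemifiniteTrace.mul_ncLpNorm_le_of_cfc {M : VonNeumannAlgebra H}
    {τ : (H →L[ℂ] H) → ℝ≥0∞} (hτ : IsNormalFaithfulSemifiniteTrace M τ) {p : ℝ} (hp : 0 < p)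
    {y : H →L[ℂ] H} {g : ℝ → ℝ} (ha : IsSelfAdjoint a)
    (hf : ContinuousOn f (spectrum ℝ a)) (hg : ContinuousOn g (spectrum ℝ a))
    (hx : star x * x = cfc (fun t => f t ^ 2) a) (hy : star y * y = cfc (fun t => g t ^ 2) a)
    (c : ℝ≥0) (hfg : ∀ t ∈ spectrum ℝ a, c * |f t| ≤ |g t|) :
    c * ncLpNorm τ p x ≤ ncLpNorm τ p y := by
  have htrace : ((c ^ p : ℝ≥0) : ℝ≥0∞) * τ (cfc (fun t => |f t| ^ p) a) ≤
      τ (cfc (fun t => |g t| ^ p) a) := by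
    refine hτ.mul_cfc_le_cfc _ (hf.abs.rpow_const fun _ _ => Or.inr hp.le)
      (hg.abs.rpow_const fun _ _ => Or.inr hp.le) (fun t _ => by positivity) fun t ht => ?_
    have := Real.rpow_le_rpow (by positivity) (hfg t ht) hp.le
    rwa [Real.mul_rpow c.coe_nonneg (abs_nonneg _), ← NNReal.coe_rpow] at this
  rw [ncLpNorm_eq_of_star_mul_self_eq_cfc hp.le ha hf hx,
    ncLpNorm_eq_of_star_mul_self_eq_cfc hp.le ha hg hy]
  calc (c : ℝ≥0∞) * τ (cfc (fun t => |f t| ^ p) a) ^ (1 / p)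
      = (((c ^ p : ℝ≥0) : ℝ≥0∞) * τ (cfc (fun t => |f t| ^ p) a)) ^ (1 / p) := by
        rw [ENNReal.mul_rpow_of_nonneg _ _ (by positivity), ENNReal.coe_rpow_of_nonneg _ hp.le,
          ← ENNReal.rpow_mul, mul_one_div_cancel hp.ne', ENNReal.rpow_one]
    _ ≤ τ (cfc (fun t => |g t| ^ p) a) ^ (1 / p) := by gcongr

end ncLpNorm

lemma Complex.norm_exp_I_mul_ofReal_sub_one_sq (t : ℝ) :
    ‖Complex.exp (Complex.I * t) - 1‖ ^ 2 = 2 * (1 - Real.cos t) := by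
  rw [Complex.norm_exp_I_mul_ofReal_sub_one, Real.norm_eq_abs, sq_abs, mul_pow,
    Real.sin_sq_eq_half_sub, mul_div_cancel₀ t two_ne_zero]
  ring

lemma Real.abs_le_two_mul_norm_exp_I_mul_ofReal_sub_one {t : ℝ} (ht : |t| ≤ Real.pi) :
    |t| ≤ 2 * ‖Complex.exp (Complex.I * t) - 1‖ := by
  have hcos := Real.cos_le_one_sub_mul_cos_sq ht
  have hπ : Real.pi ^ 2 ≤ 16 := by nlinarith [Real.pi_pos, Real.pi_le_four]
  have hk : t ^ 2 ≤ 8 * (2 / Real.pi ^ 2 * t ^ 2) := by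
    rw [← mul_assoc, ← mul_div_assoc]
    exact le_mul_of_one_le_left (sq_nonneg t) ((one_le_div (by positivity)).mpr (by linarith))
  rw [← sq_le_sq₀ (abs_nonneg t) (by positivity), sq_abs, mul_pow,
    Complex.norm_exp_I_mul_ofReal_sub_one_sq]
  linarith

theorem ncLp_norm_exp_sub_one_general {M : VonNeumannAlgebra H} {τ : (H →L[ℂ] H) → ℝ≥0∞}
    (hτ : IsNormalFaithfulSemifiniteTrace M τ) {p : ℝ} (hp : 1 ≤ p)
    (a : H →L[ℂ] H) (hsa : IsSelfAdjoint a)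
    (hbound : ‖a‖ ≤ Real.pi) :
    (1 / 2 : ℝ≥0∞) * ncLpNorm τ p a ≤
        ncLpNorm τ p (NormedSpace.exp (Complex.I • a) - 1) ∧
      ncLpNorm τ p (NormedSpace.exp (Complex.I • a) - 1) ≤ ncLpNorm τ p a := by
  have hp₀ : 0 < p := by linarith
  have hsq : star a * a = cfc (fun t : ℝ => t ^ 2) a := by
    rw [cfc_pow_id a 2 hsa, hsa.star_eq, sq]
  have hexp := hsa.star_exp_I_smul_sub_one_mul
  have hcont : ContinuousOn (fun t : ℝ => ‖Complex.exp (Complex.I * t) - 1‖) (spectrum ℝ a) := by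
    fun_prop
  have hspec : ∀ t ∈ spectrum ℝ a, |t| ≤ Real.pi := fun t ht =>
    calc |t| ≤ ‖a‖ * ‖(1 : H →L[ℂ] H)‖ := spectrum.norm_le_norm_mul_of_mem ht
      _ ≤ ‖a‖ := mul_le_of_le_one_right (norm_nonneg a) norm_id_le
      _ ≤ Real.pi := hbound
  constructor
  · have := hτ.mul_ncLpNorm_le_of_cfc hp₀ hsa continuousOn_id hcont hsq hexp (1 / 2) fun t ht => by
      norm_num [abs_norm]
      linarith [Real.abs_le_two_mul_norm_exp_I_mul_ofReal_sub_one (hspec t ht)]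
    simpa using this
  · simpa using hτ.mul_ncLpNorm_le_of_cfc hp₀ hsa hcont continuousOn_id hexp hsq 1 fun t _ => by
      simpa using Real.norm_exp_I_mul_ofReal_sub_one_le

theorem ncLp_norm_exp_sub_one {M : VonNeumannAlgebra H} {τ : (H →L[ℂ] H) → ℝ≥0∞}
    (hτ : IsNormalFaithfulSemifiniteTrace M τ) {p : ℝ} (hp : 1 ≤ p)
    (a : H →L[ℂ] H) (haM : a ∈ M) (hsa : IsSelfAdjoint a)
    (hbound : ‖a‖ ≤ Real.pi) (hLp : ncLpNorm τ p a ≠ ⊤) :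
    (1 / 2 : ℝ≥0∞) * ncLpNorm τ p a ≤
        ncLpNorm τ p (NormedSpace.exp (Complex.I • a) - 1) ∧
      ncLpNorm τ p (NormedSpace.exp (Complex.I • a) - 1) ≤ ncLpNorm τ p a :=
  ncLp_norm_exp_sub_one_general hτ hp a hsa hbound
end

section
/- Let G be a Polish group and let H ≤ G be a closed subgroup such that there exists a constant K with: for every continuous left-invariant pseudometric δ on G and every g ∈ G there is h ∈ H with δ(g,h) ≤ K (H is cobounded in G). If every continuous affine isometric action of H on a Hilbert space has a fixed point, then every continuous affine isometric action of G on a Hilbert space has a fixed point. -/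
/-!
Restricting the action to `H` gives a point `ξ` fixed by `H`. Then `δ(g, h) = ‖g • ξ - h • ξ‖` is a
continuous left-invariant pseudometric on `G`, so coboundedness puts every `g • ξ` within `K` of
some `h • ξ = ξ`: the `G`-orbit of `ξ` is bounded. By the parallelogram law, a bounded set in a
Hilbert space has a unique Chebyshev centre (the centre of the smallest ball containing it), and
uniqueness makes it fixed by every isometry preserving the orbit.
-/

universe u v

open Bornology Filter Set Topology

section supDist

variable {α : Type*} [PseudoMetricSpace α] {S : Set α}

-- `0` when `S` is empty or unbounded.
noncomputable def supDist (S : Set α) (x : α) : ℝ :=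
  sSup ((dist · x) '' S)

lemma supDist_nonneg (x : α) : 0 ≤ supDist S x :=
  Real.sSup_nonneg <| forall_mem_image.2 fun _ _ => dist_nonneg

lemma dist_le_supDist (hS : IsBounded S) {s : α} (hs : s ∈ S) (x : α) :
    dist s x ≤ supDist S x := by
  obtain ⟨r, hr⟩ := hS.subset_closedBall x
  exact le_csSup ⟨r, forall_mem_image.2 fun t ht => hr ht⟩ (mem_image_of_mem _ hs)

lemma supDist_le (hne : S.Nonempty) {x : α} {r : ℝ} (h : ∀ s ∈ S, dist s x ≤ r) :
    supDist S x ≤ r :=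
  csSup_le (hne.image _) (forall_mem_image.2 h)

lemma supDist_le_supDist_add_dist (hS : IsBounded S) (hne : S.Nonempty) (x y : α) :
    supDist S x ≤ supDist S y + dist x y :=
  supDist_le hne fun s hs =>
    (dist_triangle s y x).trans <| by rw [dist_comm y x]; gcongr; exact dist_le_supDist hS hs y

lemma lipschitzWith_supDist (hS : IsBounded S) (hne : S.Nonempty) :
    LipschitzWith 1 (supDist S) :=
  LipschitzWith.of_le_add (supDist_le_supDist_add_dist hS hne)

lemma supDist_image_of_isometry {φ : α → α} (hφ : Isometry φ) (x : α) :
    supDist (φ '' S) (φ x) = supDist S x := by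
  simp only [supDist, image_image, hφ.dist_eq]

end supDist

lemma cauchySeq_of_dist_sq_le_add {α : Type*} [PseudoMetricSpace α] {u : ℕ → α} {b : ℕ → ℝ}
    (hb : Tendsto b atTop (𝓝 0)) (h : ∀ n k, dist (u n) (u k) ^ 2 ≤ b n + b k) :
    CauchySeq u := by
  refine Metric.cauchySeq_iff.2 fun ε hε => ?_
  obtain ⟨N, hN⟩ := eventually_atTop.1 (hb.eventually (gt_mem_nhds (half_pos (pow_pos hε 2))))
  refine ⟨N, fun n hn k hk => ?_⟩
  have : dist (u n) (u k) ^ 2 < ε ^ 2 := by linarith [h n k, hN n hn, hN k hk]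
  exact lt_of_pow_lt_pow_left₀ 2 hε.le this

section Chebyshev

variable {E : Type*} [NormedAddCommGroup E] [InnerProductSpace ℝ E] {S : Set E}

/-- Uniform convexity of `supDist S`, from Apollonius' identity. -/
lemma dist_sq_le_supDist_sq_sub_supDist_midpoint_sq (hS : IsBounded S) (hne : S.Nonempty)
    (x y : E) :
    dist x y ^ 2 ≤
      2 * supDist S x ^ 2 + 2 * supDist S y ^ 2 - 4 * supDist S (midpoint ℝ x y) ^ 2 := by
  set C := (supDist S x ^ 2 + supDist S y ^ 2) / 2 - dist x y ^ 2 / 4 with hC_def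
  have hC : ∀ s ∈ S, dist s (midpoint ℝ x y) ^ 2 ≤ C := fun s hs => by
    have := EuclideanGeometry.dist_sq_add_dist_sq_eq_two_mul_dist_midpoint_sq_add_half_dist_sq s x y
    have hx := pow_le_pow_left₀ dist_nonneg (dist_le_supDist hS hs x) 2
    have hy := pow_le_pow_left₀ dist_nonneg (dist_le_supDist hS hs y) 2
    linarith
  obtain ⟨s, hs⟩ := hne
  have hC0 : 0 ≤ C := (sq_nonneg _).trans (hC s hs)
  have hmid : supDist S (midpoint ℝ x y) ≤ √C :=
    supDist_le ⟨s, hs⟩ fun t ht => (Real.le_sqrt dist_nonneg hC0).2 (hC t ht)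
  have := (Real.le_sqrt (supDist_nonneg _) hC0).1 hmid
  linarith

lemma eq_of_supDist_eq_of_forall_supDist_le (hS : IsBounded S) (hne : S.Nonempty) {c x : E}
    (hc : ∀ z, supDist S c ≤ supDist S z) (hx : supDist S x = supDist S c) : x = c := by
  have h := dist_sq_le_supDist_sq_sub_supDist_midpoint_sq hS hne x c
  have hmid := pow_le_pow_left₀ (supDist_nonneg c) (hc (midpoint ℝ x c)) 2
  rw [hx] at h
  exact dist_le_zero.1 ((sq_nonpos_iff _).1 (by linarith)).le

lemma exists_forall_supDist_le [CompleteSpace E] (hS : IsBounded S) (hne : S.Nonempty) :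
    ∃ c, ∀ x, supDist S c ≤ supDist S x := by
  set m := sInf (range (supDist S))
  have hbdd : BddBelow (range (supDist S)) := ⟨0, forall_mem_range.2 supDist_nonneg⟩
  have hm_le (x : E) : m ≤ supDist S x := csInf_le hbdd (mem_range_self x)
  have hm0 : 0 ≤ m := le_csInf (range_nonempty _) (forall_mem_range.2 supDist_nonneg)
  obtain ⟨r, -, hr, hr_mem⟩ := exists_seq_tendsto_sInf (range_nonempty (supDist S)) hbdd
  choose u hu using hr_mem
  have hfu : Tendsto (fun n => supDist S (u n)) atTop (𝓝 m) := by simpa only [hu] using hr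
  have hb : Tendsto (fun n => 2 * (supDist S (u n) ^ 2 - m ^ 2)) atTop (𝓝 0) := by
    convert ((hfu.pow 2).sub_const (m ^ 2)).const_mul 2 using 2
    ring
  have hcauchy : CauchySeq u := cauchySeq_of_dist_sq_le_add hb fun n k => by
    have := dist_sq_le_supDist_sq_sub_supDist_midpoint_sq hS hne (u n) (u k)
    have := pow_le_pow_left₀ hm0 (hm_le (midpoint ℝ (u n) (u k))) 2
    linarith
  obtain ⟨c, hc⟩ := cauchySeq_tendsto_of_complete hcauchy
  have hfc : supDist S c = m :=
    tendsto_nhds_unique (((lipschitzWith_supDist hS hne).continuous.tendsto c).comp hc) hfu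
  exact ⟨c, fun x => hfc ▸ hm_le x⟩

/-- The Chebyshev centre of `S` is fixed by every isometry preserving `S`. -/
theorem exists_forall_isometry_image_eq_imp_fixed [CompleteSpace E] (hS : IsBounded S)
    (hne : S.Nonempty) : ∃ c, ∀ φ : E → E, Isometry φ → φ '' S = S → φ c = c := by
  obtain ⟨c, hc⟩ := exists_forall_supDist_le hS hne
  refine ⟨c, fun φ hφ hφS => eq_of_supDist_eq_of_forall_supDist_le hS hne hc ?_⟩
  simpa only [hφS] using supDist_image_of_isometry (S := S) hφ c

theorem exists_fixed_of_isBounded_orbit [CompleteSpace E] {G : Type*} [Group G]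
    (α : G →* (E ≃ᵢ E)) {ξ : E} (h : IsBounded (range fun g => α g ξ)) :
    ∃ c, ∀ g, α g c = c := by
  obtain ⟨c, hc⟩ := exists_forall_isometry_image_eq_imp_fixed h (range_nonempty _)
  refine ⟨c, fun g => hc _ (α g).isometry ?_⟩
  rw [← range_comp]
  simpa only [Function.comp_def, ← IsometryEquiv.mul_apply, ← map_mul, Equiv.coe_mulLeft] using
    (Equiv.mulLeft g).surjective.range_comp fun h => α h ξ

end Chebyshev

theorem propertyFH_of_cobounded_subgroup_general {G : Type v} [Group G] [TopologicalSpace G]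
    (H : Subgroup G) (K : ℝ)
    (hcobounded : ∀ d : G → G → ℝ,
      Continuous (fun p : G × G => d p.1 p.2) →
      (∀ k g h : G, d (k * g) (k * h) = d g h) →
      (∀ g : G, d g g = 0) →
      (∀ g h : G, d g h = d h g) →
      (∀ g h k : G, d g k ≤ d g h + d h k) →
      ∀ g : G, ∃ h ∈ H, d g h ≤ K)
    (hFH_H : ∀ (𝓗 : Type u) [NormedAddCommGroup 𝓗] [InnerProductSpace ℂ 𝓗] [CompleteSpace 𝓗]
      (α : H →* (𝓗 ≃ᵢ 𝓗)), Continuous (fun p : H × 𝓗 => α p.1 p.2) →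
      ∃ x : 𝓗, ∀ h : H, α h x = x) :
    ∀ (𝓗 : Type u) [NormedAddCommGroup 𝓗] [InnerProductSpace ℂ 𝓗] [CompleteSpace 𝓗]
      (α : G →* (𝓗 ≃ᵢ 𝓗)), Continuous (fun p : G × 𝓗 => α p.1 p.2) →
      ∃ x : 𝓗, ∀ g : G, α g x = x := by
  intro 𝓗 _ _ _ α hcont
  obtain ⟨ξ, hξ⟩ := hFH_H 𝓗 (α.comp H.subtype)
    (hcont.comp (continuous_subtype_val.prodMap continuous_id))
  have horbit : Continuous fun g => α g ξ := hcont.comp (continuous_id.prodMk continuous_const)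
  have hbounded : range (fun g => α g ξ) ⊆ Metric.closedBall ξ K := by
    rintro _ ⟨g, rfl⟩
    obtain ⟨h, hH, hgh⟩ := hcobounded (fun g h => dist (α g ξ) (α h ξ))
      ((horbit.comp continuous_fst).dist (horbit.comp continuous_snd))
      (fun k g h => by simp only [map_mul, IsometryEquiv.mul_apply, IsometryEquiv.dist_eq])
      (fun _ => dist_self _) (fun _ _ => dist_comm _ _) (fun _ _ _ => dist_triangle _ _ _) g
    rwa [show α h ξ = ξ from hξ ⟨h, hH⟩] at hgh
  let _ : InnerProductSpace ℝ 𝓗 := .complexToReal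
  exact exists_fixed_of_isBounded_orbit α (Metric.isBounded_closedBall.subset hbounded)

theorem propertyFH_of_cobounded_subgroup {G : Type v} [Group G] [TopologicalSpace G]
    [IsTopologicalGroup G] [PolishSpace G]
    (H : Subgroup G) (hclosed : IsClosed (H : Set G)) (K : ℝ)
    (hcobounded : ∀ d : G → G → ℝ,
      Continuous (fun p : G × G => d p.1 p.2) →
      (∀ k g h : G, d (k * g) (k * h) = d g h) →
      (∀ g : G, d g g = 0) →
      (∀ g h : G, d g h = d h g) →
      (∀ g h k : G, d g k ≤ d g h + d h k) →
      ∀ g : G, ∃ h ∈ H, d g h ≤ K)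
    (hFH_H : ∀ (𝓗 : Type u) [NormedAddCommGroup 𝓗] [InnerProductSpace ℂ 𝓗] [CompleteSpace 𝓗]
      (α : H →* (𝓗 ≃ᵢ 𝓗)), Continuous (fun p : H × 𝓗 => α p.1 p.2) →
      ∃ x : 𝓗, ∀ h : H, α h x = x) :
    ∀ (𝓗 : Type u) [NormedAddCommGroup 𝓗] [InnerProductSpace ℂ 𝓗] [CompleteSpace 𝓗]
      (α : G →* (𝓗 ≃ᵢ 𝓗)), Continuous (fun p : G × 𝓗 => α p.1 p.2) →
      ∃ x : 𝓗, ∀ g : G, α g x = x :=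
  propertyFH_of_cobounded_subgroup_general H K hcobounded hFH_H
end
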